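/- The entire function z ↦ (z + 1)·z^{−2}·sin(π z²/2) (that is, s(z)/(z−1) where s(z) = (z²−1)z^{−2} sin(π z²/2)) belongs to the Fock space: ∫_ℂ |(z+1) z^{−2} sin(π z²/2)|² e^{−π|z|²} dm(z) < ∞. -/

import Mathlib

open Complex Real MeasureTheory

/-!
Since `|sin w| ≤ exp |Im w|` and `Im (π z² / 2) = π x y` for `z = x + i y`, the Fock weight
turns `|sin (π z² / 2)|²` into at most `exp (-π (|x| - |y|)²)`, a Gaussian ridge along the two
diagonals `x = ± y`. Away from the origin the rational factor contributes `O(1 / (1 + y²))`, which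
is integrable along the ridges; near the origin the integrand is continuous.
-/

section Shear

variable {G L : Type*} [MeasurableSpace G] [AddGroup G] [MeasurableAdd₂ G] {μ ν : Measure G}
  [SFinite μ] [SFinite ν] [μ.IsAddRightInvariant] [NormedRing L] {f g : G → L}

theorem MeasureTheory.Integrable.comp_add_mul_prod (hf : Integrable f μ) (hg : Integrable g ν) :
    Integrable (fun p : G × G => f (p.1 + p.2) * g p.2) (μ.prod ν) :=
  ((measurePreserving_add_prod μ ν).integrable_comp (hf.mul_prod hg).aestronglyMeasurable).2
    (hf.mul_prod hg)

theorem MeasureTheory.Integrable.comp_sub_mul_prod [MeasurableNeg G] (hf : Integrable f μ)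
    (hg : Integrable g ν) :
    Integrable (fun p : G × G => f (p.1 - p.2) * g p.2) (μ.prod ν) :=
  ((measurePreserving_sub_prod μ ν).integrable_comp (hf.mul_prod hg).aestronglyMeasurable).2
    (hf.mul_prod hg)

end Shear

theorem Complex.integrable_comp_re_im {E : Type*} [NormedAddCommGroup E] {F : ℝ × ℝ → E}
    (hF : Integrable F) : Integrable (fun z : ℂ => F (z.re, z.im)) :=
  (volume_preserving_equiv_real_prod.integrable_comp hF.aestronglyMeasurable).2 hF

theorem Complex.norm_sin_le_exp_abs_im (w : ℂ) : ‖sin w‖ ≤ Real.exp |w.im| := by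
  have hsum : ‖sin w‖ ≤ (Real.exp w.im + Real.exp (-w.im)) / 2 := by
    rw [sin, norm_div, norm_mul, norm_I, mul_one, Complex.norm_two]
    gcongr
    refine (norm_sub_le _ _).trans_eq ?_
    simp [Complex.norm_exp]
  have h₁ : Real.exp w.im ≤ Real.exp |w.im| := Real.exp_le_exp.2 (le_abs_self _)
  have h₂ : Real.exp (-w.im) ≤ Real.exp |w.im| := Real.exp_le_exp.2 (neg_le_abs _)
  linarith

theorem Complex.norm_sin_pi_mul_sq_div_two_le (z : ℂ) :
    ‖sin (π * z ^ 2 / 2)‖ ≤ Real.exp (π * |z.re| * |z.im|) := by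
  have him : (π * z ^ 2 / 2 : ℂ).im = π * z.re * z.im := by
    simp [pow_two]; ring
  refine (norm_sin_le_exp_abs_im _).trans_eq ?_
  rw [him, abs_mul, abs_mul, abs_of_pos pi_pos]

theorem Complex.norm_sin_pi_mul_sq_div_two_sq_mul_exp_le (z : ℂ) :
    ‖sin (π * z ^ 2 / 2)‖ ^ 2 * Real.exp (-π * ‖z‖ ^ 2) ≤
      Real.exp (-π * (|z.re| - |z.im|) ^ 2) := by
  calc ‖sin (π * z ^ 2 / 2)‖ ^ 2 * Real.exp (-π * ‖z‖ ^ 2)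
      ≤ Real.exp (π * |z.re| * |z.im|) ^ 2 * Real.exp (-π * ‖z‖ ^ 2) := by
        gcongr; exact norm_sin_pi_mul_sq_div_two_le z
    _ = Real.exp (-π * (|z.re| - |z.im|) ^ 2) := by
        rw [← Real.exp_nat_mul, ← Real.exp_add, Complex.sq_norm, normSq_apply,
          ← abs_mul_abs_self z.re, ← abs_mul_abs_self z.im]
        congr 1; push_cast; ring

theorem sq_abs_sub_abs_eq_or (x y : ℝ) :
    (|x| - |y|) ^ 2 = (x - y) ^ 2 ∨ (|x| - |y|) ^ 2 = (x + y) ^ 2 := by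
  rcases abs_cases x with ⟨hx, -⟩ | ⟨hx, -⟩ <;>
    rcases abs_cases y with ⟨hy, -⟩ | ⟨hy, -⟩ <;> rw [hx, hy] <;>
    first | (left; ring1) | (right; ring1)

theorem Real.exp_neg_mul_sq_abs_sub_abs_le (a x y : ℝ) :
    Real.exp (-a * (|x| - |y|) ^ 2) ≤
      Real.exp (-a * (x - y) ^ 2) + Real.exp (-a * (x + y) ^ 2) := by
  rcases sq_abs_sub_abs_eq_or x y with h | h <;> rw [h]
  · exact le_add_of_le_of_nonneg le_rfl (Real.exp_pos _).le
  · exact le_add_of_nonneg_of_le (Real.exp_pos _).le le_rfl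

theorem Complex.norm_add_one_div_sq_sq_le {z : ℂ} (hz : 1 ≤ ‖z‖) :
    ‖(z + 1) / z ^ 2‖ ^ 2 ≤ 8 * (1 + z.im ^ 2)⁻¹ := by
  have hz0 : 0 < ‖z‖ := one_pos.trans_le hz
  have hnum : ‖z + 1‖ ≤ 2 * ‖z‖ := by
    linarith [norm_add_le z 1, norm_one (α := ℂ)]
  have him : z.im ^ 2 ≤ ‖z‖ ^ 2 := by
    rw [← sq_abs]; exact pow_le_pow_left₀ (abs_nonneg _) (abs_im_le_norm z) 2
  rw [norm_div, norm_pow, div_pow, ← div_eq_mul_inv,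
    div_le_div_iff₀ (by positivity) (by positivity)]
  calc ‖z + 1‖ ^ 2 * (1 + z.im ^ 2) ≤ (2 * ‖z‖) ^ 2 * (2 * ‖z‖ ^ 2) := by
        gcongr; nlinarith
    _ = 8 * (‖z‖ ^ 2) ^ 2 := by ring

noncomputable def diagonalWeight (z : ℂ) : ℝ :=
  (Real.exp (-π * (z.re - z.im) ^ 2) + Real.exp (-π * (z.re + z.im) ^ 2)) * (1 + z.im ^ 2)⁻¹

theorem integrable_diagonalWeight : Integrable diagonalWeight := by
  have hgauss := integrable_exp_neg_mul_sq pi_pos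
  have hsum : Integrable (fun p : ℝ × ℝ =>
      Real.exp (-π * (p.1 - p.2) ^ 2) * (1 + p.2 ^ 2)⁻¹ +
        Real.exp (-π * (p.1 + p.2) ^ 2) * (1 + p.2 ^ 2)⁻¹) (volume.prod volume) :=
    (hgauss.comp_sub_mul_prod integrable_inv_one_add_sq).add
      (hgauss.comp_add_mul_prod integrable_inv_one_add_sq)
  rw [← Measure.volume_eq_prod] at hsum
  exact (Complex.integrable_comp_re_im hsum).congr (.of_forall fun z => (add_mul _ _ _).symm)

theorem norm_sq_mul_exp_le_diagonalWeight {z : ℂ} (hz : 1 ≤ ‖z‖) :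
    ‖(z + 1) / z ^ 2 * Complex.sin (π * z ^ 2 / 2)‖ ^ 2 * Real.exp (-π * ‖z‖ ^ 2) ≤
      8 * diagonalWeight z := by
  calc ‖(z + 1) / z ^ 2 * Complex.sin (π * z ^ 2 / 2)‖ ^ 2 * Real.exp (-π * ‖z‖ ^ 2)
      = ‖(z + 1) / z ^ 2‖ ^ 2 *
          (‖Complex.sin (π * z ^ 2 / 2)‖ ^ 2 * Real.exp (-π * ‖z‖ ^ 2)) := by
        rw [norm_mul, mul_pow, mul_assoc]
    _ ≤ 8 * (1 + z.im ^ 2)⁻¹ *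
          (Real.exp (-π * (z.re - z.im) ^ 2) + Real.exp (-π * (z.re + z.im) ^ 2)) :=
        mul_le_mul (Complex.norm_add_one_div_sq_sq_le hz)
          ((Complex.norm_sin_pi_mul_sq_div_two_sq_mul_exp_le z).trans
            (Real.exp_neg_mul_sq_abs_sub_abs_le π z.re z.im)) (by positivity) (by positivity)
    _ = 8 * diagonalWeight z := by rw [diagonalWeight]; ring

/-- The entire function z ↦ (z+1) z^{−2} sin(πz²/2), i.e. s(z)/(z−1), belongs to
the Fock space. -/
theorem s_div_z_sub_one_in_fock (t : ℂ → ℂ) (ht : Differentiable ℂ t)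
    (ht_eq : ∀ z : ℂ, z ≠ 0 → t z = (z + 1) / z ^ 2 * Complex.sin (π * z ^ 2 / 2)) :
    Integrable (fun z : ℂ => ‖t z‖ ^ 2 * Real.exp (-π * ‖z‖ ^ 2)) := by
  have hcont : Continuous fun z : ℂ => ‖t z‖ ^ 2 * Real.exp (-π * ‖z‖ ^ 2) :=
    (ht.continuous.norm.pow 2).mul (by fun_prop)
  refine hcont.locallyIntegrable.integrable_of_isBigO_cocompact
    (g := diagonalWeight) ?_ (integrable_diagonalWeight.integrableAtFilter _)
  rw [← Metric.cobounded_eq_cocompact]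
  refine Asymptotics.IsBigO.of_bound 8 ?_
  filter_upwards [tendsto_norm_cobounded_atTop.eventually_ge_atTop 1] with z hz
  have hz0 : z ≠ 0 := norm_pos_iff.1 (one_pos.trans_le hz)
  rw [Real.norm_of_nonneg (by positivity),
    Real.norm_of_nonneg (by rw [diagonalWeight]; positivity), ht_eq z hz0]
  exact norm_sq_mul_exp_le_diagonalWeight hz
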